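/- Let M be the 3-valued matrix with values {1,2,3}, designated values {1,2}, negation ¬1=3, ¬2=2, ¬3=1, and binary operations (x,y) ↦ (x∨y, x∧dy, x⊃y): (1,1)↦(2,1,1), (1,2)↦(1,1,1), (1,3)↦(1,3,3), (2,1)↦(1,1,1), (2,2)↦(1,2,1), (2,3)↦(2,3,3), (3,1)↦(1,3,2), (3,2)↦(2,3,1), (3,3)↦(3,3,1). Then M validates all axiom schemes C1–C15, the designated values are closed under modus ponens for ⊃, and there exist values a,b,c such that ¬((a∨b)∨c) ⊃ ¬(a∨(b∨c)) is not designated. Consequently the scheme ¬((α∨β)∨γ) ⊃ ¬(α∨(β∨γ)) (axiom D17) is not derivable in the system C. -/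
import Mathlib


inductive Fm where
  | atom : Nat → Fm
  | neg : Fm → Fm
  | or : Fm → Fm → Fm
  | dand : Fm → Fm → Fm
  | dimp : Fm → Fm → Fm

inductive CProv : Fm → Prop where
  | mp {a b : Fm} : CProv (.dimp a b) → CProv a → CProv b
  | ax1 {a b : Fm} : CProv (.dimp (a) (.dimp (b) (a)))
  | ax2 {a b c : Fm} : CProv (.dimp (.dimp (a) (.dimp (b) (c))) (.dimp (.dimp (a) (b)) (.dimp (a) (c))))
  | ax3 {a b : Fm} : CProv (.dimp (.dand (a) (b)) (a))
  | ax4 {a b : Fm} : CProv (.dimp (.dand (a) (b)) (b))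
  | ax5 {a b : Fm} : CProv (.dimp (a) (.dimp (b) (.dand (a) (b))))
  | ax6 {a b : Fm} : CProv (.dimp (a) (.or (a) (b)))
  | ax7 {a b : Fm} : CProv (.dimp (b) (.or (a) (b)))
  | ax8 {a b c : Fm} : CProv (.dimp (.dimp (a) (c)) (.dimp (.dimp (b) (c)) (.dimp (.or (a) (b)) (c))))
  | ax9 {a b : Fm} : CProv (.or (a) (.dimp (a) (b)))
  | ax10 {a : Fm} : CProv (.neg (.dand (.neg (a)) (.dand (.neg (.neg (a))) (.neg (.or (a) (.neg (a)))))))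
  | ax11 {a b c : Fm} : CProv (.dimp (.neg (.dand (.neg (a)) (.dand (.neg (b)) (.neg (.or (a) (b)))))) (.neg (.dand (.neg (a)) (.dand (.neg (b)) (.dand (.neg (c)) (.neg (.or (a) (.or (b) (c)))))))))
  | ax12 {a b c : Fm} : CProv (.dimp (.neg (.dand (.neg (a)) (.dand (.neg (b)) (.dand (.neg (c)) (.neg (.or (a) (.or (b) (c)))))))) (.neg (.dand (.neg (a)) (.dand (.neg (c)) (.dand (.neg (b)) (.neg (.or (a) (.or (c) (b)))))))))
  | ax13 {a b c : Fm} : CProv (.dimp (.neg (.dand (.neg (a)) (.dand (.neg (b)) (.dand (.neg (c)) (.neg (.or (a) (.or (b) (c)))))))) (.dimp (.or (a) (.or (b) (.neg (c)))) (.or (a) (b))))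
  | ax14 {a b : Fm} : CProv (.dimp (.neg (.dand (.neg (a)) (.neg (b)))) (.or (a) (b)))
  | ax15 {a b : Fm} : CProv (.dimp (.or (a) (.or (b) (.neg (b)))) (.neg (.dand (.neg (a)) (.neg (.or (b) (.neg (b)))))))

def vneg : Fin 3 → Fin 3 := ![2, 1, 0]

def vor : Fin 3 → Fin 3 → Fin 3 := ![![1, 0, 0], ![0, 0, 1], ![0, 1, 2]]

def vand : Fin 3 → Fin 3 → Fin 3 := ![![0, 0, 2], ![0, 1, 2], ![2, 2, 2]]

def vimp : Fin 3 → Fin 3 → Fin 3 := ![![0, 0, 2], ![0, 0, 2], ![1, 0, 0]]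

def Des (x : Fin 3) : Prop := x ≠ 2

instance (x : Fin 3) : Decidable (Des x) := by unfold Des; infer_instance

def evalFm (v : Nat → Fin 3) : Fm → Fin 3
  | .atom n => v n
  | .neg a => vneg (evalFm v a)
  | .or a b => vor (evalFm v a) (evalFm v b)
  | .dand a b => vand (evalFm v a) (evalFm v b)
  | .dimp a b => vimp (evalFm v a) (evalFm v b)

theorem mat1 : ∀ a b : Fin 3, Des (vimp a (vimp b a)) := by decide
theorem mat2 : ∀ a b c : Fin 3, Des (vimp (vimp a (vimp b c)) (vimp (vimp a b) (vimp a c))) := by decide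
theorem mat3 : ∀ a b : Fin 3, Des (vimp (vand a b) a) := by decide
theorem mat4 : ∀ a b : Fin 3, Des (vimp (vand a b) b) := by decide
theorem mat5 : ∀ a b : Fin 3, Des (vimp a (vimp b (vand a b))) := by decide
theorem mat6 : ∀ a b : Fin 3, Des (vimp a (vor a b)) := by decide
theorem mat7 : ∀ a b : Fin 3, Des (vimp b (vor a b)) := by decide
theorem mat8 : ∀ a b c : Fin 3, Des (vimp (vimp a c) (vimp (vimp b c) (vimp (vor a b) c))) := by decide
theorem mat9 : ∀ a b : Fin 3, Des (vor a (vimp a b)) := by decide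
theorem mat10 : ∀ a : Fin 3, Des (vneg (vand (vneg a) (vand (vneg (vneg a)) (vneg (vor a (vneg a)))))) := by decide
theorem mat11 : ∀ a b c : Fin 3, Des (vimp (vneg (vand (vneg a) (vand (vneg b) (vneg (vor a b))))) (vneg (vand (vneg a) (vand (vneg b) (vand (vneg c) (vneg (vor a (vor b c)))))))) := by decide
theorem mat12 : ∀ a b c : Fin 3, Des (vimp (vneg (vand (vneg a) (vand (vneg b) (vand (vneg c) (vneg (vor a (vor b c))))))) (vneg (vand (vneg a) (vand (vneg c) (vand (vneg b) (vneg (vor a (vor c b)))))))) := by decide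
theorem mat13 : ∀ a b c : Fin 3, Des (vimp (vneg (vand (vneg a) (vand (vneg b) (vand (vneg c) (vneg (vor a (vor b c))))))) (vimp (vor a (vor b (vneg c))) (vor a b))) := by decide
theorem mat14 : ∀ a b : Fin 3, Des (vimp (vneg (vand (vneg a) (vneg b))) (vor a b)) := by decide
theorem mat15 : ∀ a b : Fin 3, Des (vimp (vor a (vor b (vneg b))) (vneg (vand (vneg a) (vneg (vor b (vneg b)))))) := by decide
theorem matmp : ∀ x y : Fin 3, Des x → Des (vimp x y) → Des y := by decide

theorem sound {f : Fm} (h : CProv f) (v : Nat → Fin 3) : Des (evalFm v f) := by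
  induction h with
  | mp _ _ ih1 ih2 => exact matmp _ _ ih2 ih1
  | ax1 => exact mat1 _ _
  | ax2 => exact mat2 _ _ _
  | ax3 => exact mat3 _ _
  | ax4 => exact mat4 _ _
  | ax5 => exact mat5 _ _
  | ax6 => exact mat6 _ _
  | ax7 => exact mat7 _ _
  | ax8 => exact mat8 _ _ _
  | ax9 => exact mat9 _ _
  | ax10 => exact mat10 _
  | ax11 => exact mat11 _ _ _
  | ax12 => exact mat12 _ _ _
  | ax13 => exact mat13 _ _ _
  | ax14 => exact mat14 _ _
  | ax15 => exact mat15 _ _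

theorem stmt5 :
    (∀ a b : Fin 3, Des (vimp (a) (vimp (b) (a)))) ∧
    (∀ a b c : Fin 3, Des (vimp (vimp (a) (vimp (b) (c))) (vimp (vimp (a) (b)) (vimp (a) (c))))) ∧
    (∀ a b : Fin 3, Des (vimp (vand (a) (b)) (a))) ∧
    (∀ a b : Fin 3, Des (vimp (vand (a) (b)) (b))) ∧
    (∀ a b : Fin 3, Des (vimp (a) (vimp (b) (vand (a) (b))))) ∧
    (∀ a b : Fin 3, Des (vimp (a) (vor (a) (b)))) ∧
    (∀ a b : Fin 3, Des (vimp (b) (vor (a) (b)))) ∧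
    (∀ a b c : Fin 3, Des (vimp (vimp (a) (c)) (vimp (vimp (b) (c)) (vimp (vor (a) (b)) (c))))) ∧
    (∀ a b : Fin 3, Des (vor (a) (vimp (a) (b)))) ∧
    (∀ a : Fin 3, Des (vneg (vand (vneg (a)) (vand (vneg (vneg (a))) (vneg (vor (a) (vneg (a)))))))) ∧
    (∀ a b c : Fin 3, Des (vimp (vneg (vand (vneg (a)) (vand (vneg (b)) (vneg (vor (a) (b)))))) (vneg (vand (vneg (a)) (vand (vneg (b)) (vand (vneg (c)) (vneg (vor (a) (vor (b) (c)))))))))) ∧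
    (∀ a b c : Fin 3, Des (vimp (vneg (vand (vneg (a)) (vand (vneg (b)) (vand (vneg (c)) (vneg (vor (a) (vor (b) (c)))))))) (vneg (vand (vneg (a)) (vand (vneg (c)) (vand (vneg (b)) (vneg (vor (a) (vor (c) (b)))))))))) ∧
    (∀ a b c : Fin 3, Des (vimp (vneg (vand (vneg (a)) (vand (vneg (b)) (vand (vneg (c)) (vneg (vor (a) (vor (b) (c)))))))) (vimp (vor (a) (vor (b) (vneg (c)))) (vor (a) (b))))) ∧
    (∀ a b : Fin 3, Des (vimp (vneg (vand (vneg (a)) (vneg (b)))) (vor (a) (b)))) ∧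
    (∀ a b : Fin 3, Des (vimp (vor (a) (vor (b) (vneg (b)))) (vneg (vand (vneg (a)) (vneg (vor (b) (vneg (b)))))))) ∧
    (∀ x y : Fin 3, Des x → Des (vimp x y) → Des y) ∧
    (∃ a b c : Fin 3, ¬ Des (vimp (vneg (vor (vor (a) (b)) (c))) (vneg (vor (a) (vor (b) (c)))))) ∧
    ¬ (∀ a b c : Fm, CProv (.dimp (.neg (.or (.or (a) (b)) (c))) (.neg (.or (a) (.or (b) (c)))))) := by
  refine ⟨mat1, mat2, mat3, mat4, mat5, mat6, mat7, mat8, mat9, mat10, mat11, mat12,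
    mat13, mat14, mat15, matmp, ⟨1, 0, 0, by decide⟩, ?_⟩
  intro h
  have := sound (h (.atom 0) (.atom 1) (.atom 2)) (fun n => if n = 0 then 1 else 0)
  revert this
  decide
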